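/- arXiv:1702.02989 — 2 statements merged into one kernel-verified Lean document; each statement's English description precedes it below -/
import Mathlib

section
/- With H a symmetric 3×3 matrix satisfying H n = 0, P = I - n nᵀ, and K = (tr(H)² - tr(H²))/2, one has tr(H)·H - H² = K·P. In particular, for any tangential vector u (i.e. P u = u), (tr(H) H - H²) u = K u. -/
open Matrix

/-!
Because `H` is symmetric and kills `n`, it equals `P H P`, so its adjugate is
`adj P · adj H · adj P`. The projection `P` has adjugate `n nᵀ`, hence `adj H` is a
multiple of `n nᵀ`, and comparing traces gives `adj H = K n nᵀ`. For `3 × 3` matrices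
Cayley–Hamilton gives `adj H = H² - tr(H) H + K`, which rearranges to `tr(H) H - H² = K P`.
-/

theorem Matrix.vecMulVec_mul_mul_vecMulVec {α l m n o : Type*} [CommSemiring α] [Fintype m]
    [Fintype n] (u : l → α) (v : m → α) (A : Matrix m n α) (w : n → α) (x : o → α) :
    vecMulVec u v * A * vecMulVec w x = (v ⬝ᵥ A *ᵥ w) • vecMulVec u x := by
  rw [Matrix.mul_assoc, mul_vecMulVec, vecMulVec_mul_vecMulVec, vecMulVec_smul]

theorem Matrix.isIdempotentElem_vecMulVec_self {α m : Type*} [CommSemiring α] [Fintype m]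
    {n : m → α} (hn : n ⬝ᵥ n = 1) : IsIdempotentElem (vecMulVec n n) := by
  rw [IsIdempotentElem, vecMulVec_mul_vecMulVec, hn, one_smul]

section FinThree

variable {R : Type*} [Field R] [CharZero R]

theorem Matrix.adjugate_fin_three_eq_mul_self_sub_trace_smul (A : Matrix (Fin 3) (Fin 3) R) :
    adjugate A = A * A - A.trace • A + ((A.trace ^ 2 - (A * A).trace) / 2) • 1 := by
  ext i j
  fin_cases i <;> fin_cases j <;>
    simp [adjugate_fin_three, trace_fin_three, mul_apply, Fin.sum_univ_three] <;> ring

theorem Matrix.trace_adjugate_fin_three (A : Matrix (Fin 3) (Fin 3) R) :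
    (adjugate A).trace = (A.trace ^ 2 - (A * A).trace) / 2 := by
  rw [adjugate_fin_three_eq_mul_self_sub_trace_smul, trace_add, trace_sub, trace_smul, trace_smul,
    trace_one]
  simp only [Fintype.card_fin, Nat.cast_ofNat, smul_eq_mul]
  ring

theorem Matrix.adjugate_fin_three_of_isIdempotentElem {A : Matrix (Fin 3) (Fin 3) R}
    (hA : IsIdempotentElem A) (htr : A.trace = 2) : adjugate A = 1 - A := by
  rw [adjugate_fin_three_eq_mul_self_sub_trace_smul, hA.eq, htr]
  norm_num
  module

end FinThree

/-- For a symmetric `3×3` matrix `H` with `H n = 0` (unit `n`), `P = I - n nᵀ`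
and `K = (tr(H)² - tr(H²))/2` one has `tr(H)·H - H² = K·P`; in particular
`(tr(H) H - H²) u = K u` for every tangential vector `u` (i.e. `P u = u`). -/
theorem trace_H_smul_sub_sq (n : Fin 3 → ℝ) (hn : n ⬝ᵥ n = 1)
    (H : Matrix (Fin 3) (Fin 3) ℝ) (hsym : Hᵀ = H) (hHn : H.mulVec n = 0)
    (P : Matrix (Fin 3) (Fin 3) ℝ) (hP : P = 1 - vecMulVec n n)
    (K : ℝ) (hK : K = ((H.trace) ^ 2 - (H * H).trace) / 2) :
    H.trace • H - H * H = K • P ∧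
      ∀ u : Fin 3 → ℝ, P.mulVec u = u → (H.trace • H - H * H).mulVec u = K • u := by
  have hHP : H * P = H := by
    rw [hP, Matrix.mul_sub, Matrix.mul_one, mul_vecMulVec, hHn, zero_vecMulVec, sub_zero]
  have hPH : P * H = H := by
    rw [← transpose_transpose (P * H), transpose_mul, hsym, hP, transpose_sub, transpose_one,
      transpose_vecMulVec, ← hP, hHP, hsym]
  have hadjP : adjugate P = vecMulVec n n := by
    rw [hP, adjugate_fin_three_of_isIdempotentElem (isIdempotentElem_vecMulVec_self hn).one_sub,
      sub_sub_cancel]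
    rw [trace_sub, trace_one, trace_vecMulVec, hn]
    norm_num
  have hadjH : adjugate H = (n ⬝ᵥ adjugate H *ᵥ n) • vecMulVec n n :=
    calc adjugate H = adjugate (P * H * P) := by rw [hPH, hHP]
      _ = vecMulVec n n * adjugate H * vecMulVec n n := by
        rw [adjugate_mul_distrib, adjugate_mul_distrib, hadjP, Matrix.mul_assoc]
      _ = _ := vecMulVec_mul_mul_vecMulVec ..
  have hcoeff : n ⬝ᵥ adjugate H *ᵥ n = K := by
    have htr := congrArg trace hadjH
    rwa [trace_smul, trace_vecMulVec, hn, smul_eq_mul, mul_one, trace_adjugate_fin_three, ← hK,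
      eq_comm] at htr
  have key : H.trace • H - H * H = K • P := by
    calc H.trace • H - H * H = K • 1 - adjugate H := by
          rw [adjugate_fin_three_eq_mul_self_sub_trace_smul, ← hK]; abel
      _ = K • P := by rw [hadjH, hcoeff, hP, smul_sub]
  refine ⟨key, fun u hu => ?_⟩
  rw [key, smul_mulVec, hu]
end

section
/- Coercivity of the penalized bilinear form: Let Γ be a closed C² hypersurface with bounded Weingarten map H, and for u = u_T + u_N n ∈ V_*⁰ define â_τ(u,u) := 2μ‖E_s(u_T) + u_N H‖²_{L²} + τ‖u_N‖²_{L²}. If τ > 2μ‖H‖²_{L^∞(Γ)}, then there exists c > 0 with â_τ(u,u) ≥ μ c_K² ‖u_T‖₁² + (τ - 2μ‖H‖²_{L^∞}) ‖u_N‖²_{L²} ≥ c (‖u_T‖₁² + ‖u_N‖²_{L²}) for all u ∈ V_*⁰, where c_K is the surface Korn constant. -/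
/-!
Write `a := E_s(u_T)` and `b := u_N H`. The elementary inequality `‖a + b‖² ≥ ½‖a‖² - ‖b‖²`
gives `2μ‖a + b‖² ≥ μ‖a‖² - 2μ‖b‖²`; Korn bounds `‖a‖²` below by `c_K²‖u_T‖₁²` and the
`L^∞` bound on `H` bounds `‖b‖²` above by `‖H‖²_{L^∞}‖u_N‖²`. The penalty `τ‖u_N‖²` absorbs
the negative term, and `c` is the smaller of the two resulting coefficients.
-/

theorem norm_sq_le_two_mul_norm_add_sq_add_norm_sq {E : Type*} [SeminormedAddCommGroup E]
    (a b : E) : ‖a‖ ^ 2 ≤ 2 * (‖a + b‖ ^ 2 + ‖b‖ ^ 2) :=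
  calc ‖a‖ ^ 2 ≤ (‖a + b‖ + ‖b‖) ^ 2 := by
        gcongr
        simpa using norm_le_norm_add_norm_sub (a + b) a
    _ ≤ 2 * (‖a + b‖ ^ 2 + ‖b‖ ^ 2) := add_sq_le

theorem min_mul_add_le {p q x y : ℝ} (hx : 0 ≤ x) (hy : 0 ≤ y) :
    min p q * (x + y) ≤ p * x + q * y := by
  rw [mul_add]
  gcongr
  exacts [min_le_left p q, min_le_right p q]

theorem penalized_form_lower_bound {E : Type*} [SeminormedAddCommGroup E] {a b : E}
    {μ τ s t k h : ℝ} (hμ : 0 ≤ μ) (hks : 0 ≤ k * s) (ha : k * s ≤ ‖a‖) (hb : ‖b‖ ≤ h * t) :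
    μ * k ^ 2 * s ^ 2 + (τ - 2 * μ * h ^ 2) * t ^ 2 ≤ 2 * μ * ‖a + b‖ ^ 2 + τ * t ^ 2 := by
  have ha2 : k ^ 2 * s ^ 2 ≤ ‖a‖ ^ 2 := by
    simpa only [mul_pow] using pow_le_pow_left₀ hks ha 2
  have hb2 : ‖b‖ ^ 2 ≤ h ^ 2 * t ^ 2 := by
    simpa only [mul_pow] using pow_le_pow_left₀ (norm_nonneg b) hb 2
  have hab := mul_le_mul_of_nonneg_left (norm_sq_le_two_mul_norm_add_sq_add_norm_sq a b) hμ
  linarith [mul_le_mul_of_nonneg_left ha2 hμ, mul_le_mul_of_nonneg_left hb2 hμ]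

/-- `VT`, `L`, `M` model the tangential `H¹` fields, the normal `L²` components and the `L²`
tensor fields; `mulH u_N = u_N H`, `normH = ‖H‖_{L^∞}`, and `V_T⁰` is `(ker E_s)ᗮ`, the complement
of the Killing fields. -/
theorem penalized_form_coercive_general
    {VT L M : Type*}
    [NormedAddCommGroup VT] [InnerProductSpace ℝ VT]
    [NormedAddCommGroup L] [InnerProductSpace ℝ L]
    [NormedAddCommGroup M] [InnerProductSpace ℝ M]
    (Es : VT →L[ℝ] M) (mulH : L →L[ℝ] M)
    (μ τ normH cK : ℝ) (hμ : 0 < μ) (hcK : 0 < cK)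
    (hmulH : ∀ w : L, ‖mulH w‖ ≤ normH * ‖w‖)
    (hKorn : ∀ uT ∈ (LinearMap.ker (Es : VT →ₗ[ℝ] M))ᗮ, cK * ‖uT‖ ≤ ‖Es uT‖)
    (hτ : 2 * μ * normH ^ 2 < τ) :
    ∃ c > 0, ∀ uT ∈ (LinearMap.ker (Es : VT →ₗ[ℝ] M))ᗮ, ∀ uN : L,
      (μ * cK ^ 2 * ‖uT‖ ^ 2 + (τ - 2 * μ * normH ^ 2) * ‖uN‖ ^ 2
          ≤ 2 * μ * ‖Es uT + mulH uN‖ ^ 2 + τ * ‖uN‖ ^ 2)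
        ∧ c * (‖uT‖ ^ 2 + ‖uN‖ ^ 2)
          ≤ 2 * μ * ‖Es uT + mulH uN‖ ^ 2 + τ * ‖uN‖ ^ 2 := by
  refine ⟨min (μ * cK ^ 2) (τ - 2 * μ * normH ^ 2), lt_min (by positivity) (by linarith), ?_⟩
  intro uT hT uN
  have hbound := penalized_form_lower_bound (τ := τ) hμ.le (by positivity) (hKorn uT hT)
    (hmulH uN)
  exact ⟨hbound, (min_mul_add_le (sq_nonneg _) (sq_nonneg _)).trans hbound⟩

/-- Coercivity of the penalized bilinear form `â_τ` (abstract form).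
`VT` plays the role of the tangential `H¹` fields, `L` of the normal `L²`
components, `M` of the `L²` tensor fields; `Es` is the surface rate-of-strain
operator, `mulH : u_N ↦ u_N H` multiplication by the bounded Weingarten map
(`‖u_N H‖_{L²} ≤ ‖H‖_{L^∞} ‖u_N‖_{L²}`), `cK` the surface Korn constant on
`V_T⁰ = Eᗮ` with `E = ker E_s` the Killing fields.  If `τ > 2μ‖H‖²_{L^∞}` then
`â_τ(u,u) = 2μ‖E_s(u_T) + u_N H‖² + τ‖u_N‖²
  ≥ μ c_K² ‖u_T‖₁² + (τ - 2μ‖H‖²_{L^∞})‖u_N‖² ≥ c(‖u_T‖₁² + ‖u_N‖²)`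
for all `u = (u_T, u_N) ∈ V_*⁰`. -/
theorem penalized_form_coercive
    {VT L M : Type*}
    [NormedAddCommGroup VT] [InnerProductSpace ℝ VT] [CompleteSpace VT]
    [NormedAddCommGroup L] [InnerProductSpace ℝ L]
    [NormedAddCommGroup M] [InnerProductSpace ℝ M]
    (Es : VT →L[ℝ] M) (mulH : L →L[ℝ] M)
    (μ τ normH cK : ℝ) (hμ : 0 < μ) (hnormH : 0 ≤ normH) (hcK : 0 < cK)
    (hmulH : ∀ w : L, ‖mulH w‖ ≤ normH * ‖w‖)
    (hKorn : ∀ uT ∈ (LinearMap.ker (Es : VT →ₗ[ℝ] M))ᗮ, cK * ‖uT‖ ≤ ‖Es uT‖)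
    (hτ : 2 * μ * normH ^ 2 < τ) :
    ∃ c > 0, ∀ uT ∈ (LinearMap.ker (Es : VT →ₗ[ℝ] M))ᗮ, ∀ uN : L,
      (μ * cK ^ 2 * ‖uT‖ ^ 2 + (τ - 2 * μ * normH ^ 2) * ‖uN‖ ^ 2
          ≤ 2 * μ * ‖Es uT + mulH uN‖ ^ 2 + τ * ‖uN‖ ^ 2)
        ∧ c * (‖uT‖ ^ 2 + ‖uN‖ ^ 2)
          ≤ 2 * μ * ‖Es uT + mulH uN‖ ^ 2 + τ * ‖uN‖ ^ 2 :=
  penalized_form_coercive_general Es mulH μ τ normH cK hμ hcK hmulH hKorn hτ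
end
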